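/- Let G be a simple undirected connected graph with n ≥ 2 vertices and α ∈ [0,1]. Then the α-distance Estrada index satisfies DEE_α(G) ≤ e^{2αW(G)/n} · ( n − 1 − ς_α(G) + e^{ς_α(G)} ). -/

import Mathlib

open Finset Matrix Polynomial Real

/-- Distance matrix of a graph on `Fin n`: `(i,j)` entry is the graph distance. -/
noncomputable def distMatrix {n : ℕ} (G : SimpleGraph (Fin n)) : Matrix (Fin n) (Fin n) ℝ :=
  fun i j => (G.dist i j : ℝ)

/-- Transmission of a vertex: sum of distances to all other vertices. -/
noncomputable def transmission {n : ℕ} (G : SimpleGraph (Fin n)) (i : Fin n) : ℝ :=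
  ∑ j, (G.dist i j : ℝ)

/-- The α-distance matrix `D_α(G) = α·Tr(G) + (1-α)·D(G)`. -/
noncomputable def alphaDistMatrix {n : ℕ} (G : SimpleGraph (Fin n)) (α : ℝ) : Matrix (Fin n) (Fin n) ℝ :=
  α • Matrix.diagonal (transmission G) + (1 - α) • distMatrix G

/-- Wiener index `W(G) = (1/2)·∑_{i≠j} d(v_i,v_j)`. -/
noncomputable def wiener {n : ℕ} (G : SimpleGraph (Fin n)) : ℝ :=
  (1 / 2) * ∑ i, ∑ j, (G.dist i j : ℝ)

/-- Frobenius norm of a real matrix. -/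
noncomputable def frobNorm {n : ℕ} (M : Matrix (Fin n) (Fin n) ℝ) : ℝ :=
  Real.sqrt (∑ i, ∑ j, (M i j) ^ 2)

/-!
Write `σᵢ = c + tᵢ` with `c = 2αW/n` the mean eigenvalue, so `∑ tᵢ = 0` because
`tr D_α = α ∑ Tr(vᵢ) = 2αW`. Pointwise `eᵗ ≤ e^|t| - |t| + t`, and since `x ↦ eˣ - 1 - x` is
superadditive on `[0, ∞)`, `∑ (e^|tᵢ| - 1 - |tᵢ|) ≤ e^S - 1 - S` with `S = ∑ |tᵢ| = ς_α`.
-/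

theorem trace_alphaDistMatrix {n : ℕ} (G : SimpleGraph (Fin n)) (α : ℝ) :
    (alphaDistMatrix G α).trace = 2 * α * wiener G := by
  have hdist : (distMatrix G).trace = 0 := by simp [trace, distMatrix]
  rw [alphaDistMatrix, trace_add, trace_smul, trace_smul, trace_diagonal, hdist, smul_zero,
    add_zero, smul_eq_mul, wiener]
  simp only [transmission]
  ring

theorem Real.exp_le_exp_abs_sub_abs_add (t : ℝ) : exp t ≤ exp |t| - |t| + t := by
  rcases le_or_gt 0 t with ht | ht
  · simp [abs_of_nonneg ht]
  · rw [abs_of_neg ht]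
    have hsinh : sinh t < t := sinh_lt_self_iff.2 ht
    rw [sinh_eq] at hsinh
    linarith

theorem Real.sum_exp_sub_one_sub_le {ι : Type*} (s : Finset ι) (x : ι → ℝ)
    (hx : ∀ i ∈ s, 0 ≤ x i) :
    ∑ i ∈ s, (exp (x i) - 1 - x i) ≤ exp (∑ i ∈ s, x i) - 1 - ∑ i ∈ s, x i := by
  induction s using Finset.cons_induction with
  | empty => simp
  | cons a s ha ih =>
    simp only [sum_cons]
    have hxa : 0 ≤ x a := hx a (mem_cons_self _ _)
    have hxs : 0 ≤ ∑ i ∈ s, x i := sum_nonneg fun i hi => hx i (mem_cons_of_mem hi)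
    have ih' := ih fun i hi => hx i (mem_cons_of_mem hi)
    have hprod : 0 ≤ (exp (x a) - 1) * (exp (∑ i ∈ s, x i) - 1) :=
      mul_nonneg (sub_nonneg.2 (one_le_exp hxa)) (sub_nonneg.2 (one_le_exp hxs))
    nlinarith [exp_add (x a) (∑ i ∈ s, x i)]

theorem Finset.sum_sub_average {ι : Type*} [Fintype ι] (x : ι → ℝ) :
    ∑ i, (x i - (∑ j, x j) / Fintype.card ι) = 0 := by
  rcases isEmpty_or_nonempty ι with _ | _
  · simp
  · rw [sum_sub_distrib, sum_const, card_univ, nsmul_eq_mul,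
      mul_div_cancel₀ _ (Nat.cast_ne_zero.2 Fintype.card_ne_zero), sub_self]

theorem Real.sum_exp_le_exp_average_mul {ι : Type*} [Fintype ι] (x : ι → ℝ) :
    let c := (∑ i, x i) / Fintype.card ι
    let S := ∑ i, |x i - c|
    ∑ i, exp (x i) ≤ exp c * (Fintype.card ι - 1 - S + exp S) := by
  intro c S
  have hsuperadd := sum_exp_sub_one_sub_le univ (fun i => |x i - c|) fun i _ => abs_nonneg _
  simp only [sum_sub_distrib, sum_const, card_univ, nsmul_eq_mul, mul_one] at hsuperadd
  calc ∑ i, exp (x i) = exp c * ∑ i, exp (x i - c) := by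
        rw [mul_sum]; congr 1; ext i; rw [← exp_add]; ring_nf
    _ ≤ exp c * ∑ i, (exp |x i - c| - |x i - c| + (x i - c)) := by
        gcongr with i; exact exp_le_exp_abs_sub_abs_add _
    _ = exp c * ((∑ i, exp |x i - c|) - S) := by
        rw [sum_add_distrib, sum_sub_distrib, sum_sub_average, add_zero]
    _ ≤ exp c * (Fintype.card ι - 1 - S + exp S) := by
        gcongr; linarith

theorem stmt_18_general {n : ℕ} (G : SimpleGraph (Fin n))
    (α : ℝ)
    (hA : (alphaDistMatrix G α).IsHermitian) :
    (∑ i, Real.exp (hA.eigenvalues i)) ≤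
      Real.exp (2 * α * wiener G / n) *
        ((n : ℝ) - 1 - (∑ i, |hA.eigenvalues i - 2 * α * wiener G / n|) +
          Real.exp (∑ i, |hA.eigenvalues i - 2 * α * wiener G / n|)) := by
  have hmean : (∑ i, hA.eigenvalues i) / n = 2 * α * wiener G / n := by
    rw [← trace_alphaDistMatrix, hA.trace_eq_sum_eigenvalues]
    simp
  have h := sum_exp_le_exp_average_mul hA.eigenvalues
  rwa [Fintype.card_fin, hmean] at h

theorem stmt_18 {n : ℕ} (hn : 2 ≤ n) (G : SimpleGraph (Fin n)) (hG : G.Connected)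
    (α : ℝ) (hα : α ∈ Set.Icc (0 : ℝ) 1)
    (hA : (alphaDistMatrix G α).IsHermitian) :
    (∑ i, Real.exp (hA.eigenvalues i)) ≤
      Real.exp (2 * α * wiener G / n) *
        ((n : ℝ) - 1 - (∑ i, |hA.eigenvalues i - 2 * α * wiener G / n|) +
          Real.exp (∑ i, |hA.eigenvalues i - 2 * α * wiener G / n|)) :=
  stmt_18_general G α hA
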